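/- arXiv:2503.13622 — 2 statements merged into one kernel-verified Lean document; each statement's English description precedes it below -/
import Mathlib

section
/- Let κ, σ be nonnegative kernels on X and Ŝ(κ,σ) as defined via chain infima. Then: Ŝ(κ,σ) ≤ κ; Ŝ(κ,σ) is the supremum of all kernels φ ≤ κ with φ right dominated by σ; and if κ is right dominated by σ, then κ = Ŝ(κ,σ). -/
/-- Sum of `σ`-values along a chain starting with `σ x ·`. -/
def sigSum {X : Type*} (σ : X → X → ℝ) : X → List X → X → ℝ
  | x, [], y => σ x y
  | x, z :: p, y => σ x z + sigSum σ z p y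

/-- `S(κ,σ)(x,p,y)`: first step uses `κ`, later steps use `σ`. -/
def Sker {X : Type*} (κ σ : X → X → ℝ) (x : X) (p : List X) (y : X) : ℝ :=
  match p with
  | [] => κ x y
  | z :: q => κ x z + sigSum σ z q y

/-- `Ŝ(κ,σ)(x,y)`: infimum over all chains. -/
noncomputable def Shat {X : Type*} (κ σ : X → X → ℝ) (x y : X) : ℝ :=
  sInf {s : ℝ | ∃ p : List X, s = Sker κ σ x p y}

lemma sigSum_nonneg {X : Type*} {σ : X → X → ℝ} (hσ : ∀ x y, 0 ≤ σ x y) :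
    ∀ (p : List X) (x y : X), 0 ≤ sigSum σ x p y
  | [], x, y => hσ x y
  | z :: p, x, y => add_nonneg (hσ x z) (sigSum_nonneg hσ p z y)

lemma sigSum_append {X : Type*} (σ : X → X → ℝ) :
    ∀ (p : List X) (x y z : X),
      sigSum σ x (p ++ [y]) z = sigSum σ x p y + σ y z
  | [], x, y, z => rfl
  | a :: p, x, y, z => by
    simp [sigSum, sigSum_append σ p a y z, add_assoc]

lemma Sker_append {X : Type*} (κ σ : X → X → ℝ) (x : X) (p : List X) (y z : X) :
    Sker κ σ x (p ++ [y]) z = Sker κ σ x p y + σ y z := by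
  cases p with
  | nil => rfl
  | cons a q => simp [Sker, sigSum_append, add_assoc]

lemma phi_le_sigSum {X : Type*} {φ σ : X → X → ℝ}
    (hdom : ∀ x y z, φ x z ≤ φ x y + σ y z) :
    ∀ (q : List X) (x a y : X), φ x y ≤ φ x a + sigSum σ a q y
  | [], x, a, y => hdom x a y
  | b :: q, x, a, y => by
    calc φ x y ≤ φ x b + sigSum σ b q y := phi_le_sigSum hdom q x b y
    _ ≤ (φ x a + σ a b) + sigSum σ b q y := by
        have := hdom x a b; linarith
    _ = φ x a + sigSum σ a (b :: q) y := by simp [sigSum, add_assoc]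

theorem stmt_13 {X : Type*} (κ σ : X → X → ℝ)
    (hκ : ∀ x y, 0 ≤ κ x y) (hσ : ∀ x y, 0 ≤ σ x y) :
    (∀ x y, Shat κ σ x y ≤ κ x y) ∧
    (∀ x y z, Shat κ σ x z ≤ Shat κ σ x y + σ y z) ∧
    (∀ φ : X → X → ℝ, (∀ x y, φ x y ≤ κ x y) →
      (∀ x y z, φ x z ≤ φ x y + σ y z) →
      ∀ x y, φ x y ≤ Shat κ σ x y) ∧
    ((∀ x y z, κ x z ≤ κ x y + σ y z) → Shat κ σ = κ) := by
  have hSker_nonneg : ∀ (x : X) (p : List X) (y : X), 0 ≤ Sker κ σ x p y := by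
    intro x p y
    cases p with
    | nil => exact hκ x y
    | cons a q => exact add_nonneg (hκ x a) (sigSum_nonneg hσ q a y)
  have hbdd : ∀ x y, BddBelow {s : ℝ | ∃ p : List X, s = Sker κ σ x p y} := by
    intro x y
    exact ⟨0, fun s ⟨p, hp⟩ => hp ▸ hSker_nonneg x p y⟩
  have hne : ∀ x y, ({s : ℝ | ∃ p : List X, s = Sker κ σ x p y}).Nonempty :=
    fun x y => ⟨κ x y, [], rfl⟩
  have h1 : ∀ x y, Shat κ σ x y ≤ κ x y := fun x y =>
    csInf_le (hbdd x y) ⟨[], rfl⟩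
  have h3 : ∀ φ : X → X → ℝ, (∀ x y, φ x y ≤ κ x y) →
      (∀ x y z, φ x z ≤ φ x y + σ y z) → ∀ x y, φ x y ≤ Shat κ σ x y := by
    intro φ hle hdom x y
    apply le_csInf (hne x y)
    rintro s ⟨p, rfl⟩
    cases p with
    | nil => exact hle x y
    | cons a q =>
      calc φ x y ≤ φ x a + sigSum σ a q y := phi_le_sigSum hdom q x a y
      _ ≤ κ x a + sigSum σ a q y := by have := hle x a; linarith
  have h2 : ∀ x y z, Shat κ σ x z ≤ Shat κ σ x y + σ y z := by
    intro x y z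
    rw [← sub_le_iff_le_add]
    apply le_csInf (hne x y)
    rintro s ⟨p, rfl⟩
    rw [sub_le_iff_le_add]
    have : Shat κ σ x z ≤ Sker κ σ x (p ++ [y]) z :=
      csInf_le (hbdd x z) ⟨p ++ [y], rfl⟩
    rwa [Sker_append] at this
  refine ⟨h1, h2, h3, fun hdom => ?_⟩
  funext x y
  exact le_antisymm (h1 x y) (h3 κ (fun _ _ => le_refl _) hdom x y)
end

section
/- Let F : X × Y → ℝ be a bridge on X ⊔ Y. Fix (x₀, y₀) ∈ X × Y, and set f(x) = F(x₀,y₀) + F(x,y₀) and g(y) = F(x₀,y). Then G(x,y) = f(x) + g(y) is a bridge on X ⊔ Y with F(x,y) ≤ G(x,y) for all (x,y) ∈ X × Y; i.e., every bridge is dominated by a Flood–Pestov bridge. -/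
theorem stmt_18 {X Y : Type*}
    (F : X → Y → ℝ)
    (hB : ∀ x₁ x₂ y₁ y₂, F x₁ y₁ - F x₂ y₂ ≤ F x₁ y₂ + F x₂ y₁)
    (x₀ : X) (y₀ : Y) :
    ∃ f : X → ℝ, ∃ g : Y → ℝ,
      (∀ x, f x = F x₀ y₀ + F x y₀) ∧
      (∀ y, g y = F x₀ y) ∧
      (∀ x₁ x₂ y₁ y₂, (f x₁ + g y₁) - (f x₂ + g y₂) ≤ (f x₁ + g y₂) + (f x₂ + g y₁)) ∧
      (∀ x y, F x y ≤ f x + g y) := by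
  refine ⟨fun x => F x₀ y₀ + F x y₀, fun y => F x₀ y, fun x => rfl, fun y => rfl, ?_, ?_⟩
  · intro x₁ x₂ y₁ y₂
    simp only
    have h1 := hB x₂ x₂ y₀ y₀
    have h2 := hB x₀ x₀ y₂ y₂
    have h3 := hB x₀ x₀ y₀ y₀
    linarith
  · intro x y
    simp only
    have := hB x x₀ y y₀
    linarith
end
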